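/- Let B be a reduced abelian p-group, S a finite subgroup of B, and d ∈ B \ S such that pd ∈ S, d is proper with respect to S, d has ordinal height h(d), and h(pd) > h(d) + 1. Then there exists v ∈ B_{h(d)+1} with pv = pd, and for any such v the element d − v lies in P_{h(d)}(B), has height exactly h(d), and is proper with respect to S. -/

import Mathlib

open Ordinal

/-- Scalar multiplication by `p` as an additive group homomorphism. -/
def pHom (p : ℕ) (G : Type*) [AddCommGroup G] : G →+ G :=
  AddMonoidHom.mk' (fun x => p • x) (fun a b => smul_add p a b)

@[simp] lemma pHom_apply (p : ℕ) {G : Type*} [AddCommGroup G] (x : G) :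
    pHom p G x = p • x := rfl

/-- The Ulm subgroups `G_β`: `G_0 = G`, `G_{β+1} = pG_β`, and intersections at limits. -/
noncomputable def ulmSub (p : ℕ) (G : Type*) [AddCommGroup G] (β : Ordinal.{0}) :
    AddSubgroup G :=
  Ordinal.limitRecOn β ⊤ (fun _ H => AddSubgroup.map (pHom p G) H)
    (fun o _ ih => ⨅ (γ : Ordinal.{0}) (h : γ < o), ih γ h)

lemma ulmSub_succ (p : ℕ) (G : Type*) [AddCommGroup G] (β : Ordinal.{0}) :
    ulmSub p G (β + 1) = AddSubgroup.map (pHom p G) (ulmSub p G β) := by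
  unfold ulmSub
  rw [Ordinal.add_one_eq_succ, Ordinal.limitRecOn_succ]

lemma ulmSub_succ_le (p : ℕ) (G : Type*) [AddCommGroup G] (β : Ordinal.{0}) :
    ulmSub p G (β + 1) ≤ ulmSub p G β := by
  rw [ulmSub_succ]
  rintro x ⟨y, hy, rfl⟩
  simpa using (ulmSub p G β).nsmul_mem hy p

/-- An abelian `p`-group: every element is killed by some power of `p`. -/
def IsAbelianPGroup (p : ℕ) (G : Type*) [AddCommGroup G] : Prop :=
  ∀ x : G, ∃ n : ℕ, p ^ n • x = 0

/-- The length `λ(G)`: the least ordinal `β` with `G_β = G_{β+1}`. -/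
noncomputable def ulmLength (p : ℕ) (G : Type*) [AddCommGroup G] : Ordinal.{0} :=
  sInf {β : Ordinal.{0} | ulmSub p G β = ulmSub p G (β + 1)}

/-- `G` is reduced if `G_{λ(G)} = {0}`. -/
def IsReducedPGroup (p : ℕ) (G : Type*) [AddCommGroup G] : Prop :=
  ulmSub p G (ulmLength p G) = ⊥

/-- `P_β(G) = {x ∈ G_β : px = 0}`. -/
noncomputable def ulmP (p : ℕ) (G : Type*) [AddCommGroup G] (β : Ordinal.{0}) : AddSubgroup G :=
  (pHom p G).ker ⊓ ulmSub p G β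

/-- The quotient `P_β(G)/P_{β+1}(G)` (as a quotient of `P_β(G)` by the subgroup
corresponding to `P_{β+1}(G)`). -/
noncomputable def ulmQuot (p : ℕ) (G : Type*) [AddCommGroup G] (β : Ordinal.{0}) :=
  (ulmP p G β) ⧸ ((ulmP p G (β + 1)).addSubgroupOf (ulmP p G β))

noncomputable instance (p : ℕ) (G : Type*) [AddCommGroup G] (β : Ordinal.{0}) :
    AddCommGroup (ulmQuot p G β) :=
  inferInstanceAs (AddCommGroup ((ulmP p G β) ⧸ ((ulmP p G (β + 1)).addSubgroupOf (ulmP p G β))))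

noncomputable instance (p : ℕ) (G : Type*) [AddCommGroup G] (β : Ordinal.{0}) :
    Module (ZMod p) (ulmQuot p G β) :=
  QuotientAddGroup.zmodModule (by
    intro x
    simp only [AddSubgroup.mem_addSubgroupOf]
    have hx : ((p • x : ulmP p G β) : G) = 0 := by
      have this : (x : G) ∈ (pHom p G).ker := (AddSubgroup.mem_inf.mp x.2).1
      rw [AddMonoidHom.mem_ker, pHom_apply] at this
      simpa using this
    rw [hx]
    exact (ulmP p G (β + 1)).zero_mem)

/-- The Ulm invariant `u_β(G)`: the dimension of `P_β(G)/P_{β+1}(G)` over `ℤ/pℤ`. -/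
noncomputable def ulmInvariant (p : ℕ) (G : Type*) [AddCommGroup G] (β : Ordinal.{0}) :
    Cardinal :=
  Module.rank (ZMod p) (ulmQuot p G β)

open Classical in
/-- The height of `x`: the unique ordinal `β` with `x ∈ G_β \ G_{β+1}` if it exists, and `∞`
(= `⊤`) otherwise. -/
noncomputable def height (p : ℕ) {G : Type*} [AddCommGroup G] (x : G) : WithTop Ordinal.{0} :=
  if ∃ β : Ordinal.{0}, x ∈ ulmSub p G β ∧ x ∉ ulmSub p G (β + 1) then
    ((sInf {β : Ordinal.{0} | x ∈ ulmSub p G β ∧ x ∉ ulmSub p G (β + 1)} : Ordinal.{0}) :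
      WithTop Ordinal.{0})
  else ⊤

/-- `d` is proper with respect to `S` if `h(d) ≥ h(d+s)` for every `s ∈ S`. -/
def ProperWRT (p : ℕ) {G : Type*} [AddCommGroup G] (S : AddSubgroup G) (d : G) : Prop :=
  ∀ s ∈ S, height p (d + s) ≤ height p d

/-! Heights at most `β` are detected by non-membership in `G_{β+1}`. Since `h(pd) > β + 1`,
`pd ∈ G_{β+2} = p G_{β+1}`, which gives `v`. Translating by `v ∈ G_{β+1}` changes neither
`d ∈ G_β \ G_{β+1}` nor `d + s ∉ G_{β+1}`, so height `β` and properness survive. -/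

section UlmSubgroups

variable {p : ℕ} {G : Type*} [AddCommGroup G]

lemma ulmSub_zero : ulmSub p G 0 = ⊤ := by
  unfold ulmSub; rw [Ordinal.limitRecOn_zero]

lemma ulmSub_limit {β : Ordinal.{0}} (hβ : Order.IsSuccLimit β) :
    ulmSub p G β = ⨅ (γ : Ordinal.{0}) (_ : γ < β), ulmSub p G γ := by
  unfold ulmSub; rw [Ordinal.limitRecOn_limit _ _ _ _ hβ]

lemma ulmSub_antitone : Antitone (ulmSub p G) := by
  intro γ β hγβ
  induction β using Ordinal.limitRecOn generalizing γ with
  | zero => rw [nonpos_iff_eq_zero.mp hγβ]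
  | add_one β ih =>
    rcases hγβ.eq_or_lt with rfl | hlt
    · exact le_rfl
    · exact (ulmSub_succ_le p G β).trans (ih (Order.lt_add_one_iff.mp hlt))
  | limit β hβ ih =>
    rcases hγβ.eq_or_lt with rfl | hlt
    · exact le_rfl
    · rw [ulmSub_limit hβ]
      exact iInf₂_le γ hlt

lemma exists_lt_mem_ulmSub_not_mem_succ {x : G} {μ : Ordinal.{0}} (hx : x ∉ ulmSub p G μ) :
    ∃ δ < μ, x ∈ ulmSub p G δ ∧ x ∉ ulmSub p G (δ + 1) := by
  induction μ using Ordinal.limitRecOn with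
  | zero => exact absurd ((ulmSub_zero (p := p) (G := G)).symm ▸ AddSubgroup.mem_top x) hx
  | add_one μ ih =>
    by_cases hμ : x ∈ ulmSub p G μ
    · exact ⟨μ, Order.lt_add_one_iff.mpr le_rfl, hμ, hx⟩
    · obtain ⟨δ, hδ, hδx⟩ := ih hμ
      exact ⟨δ, hδ.trans (Order.lt_add_one_iff.mpr le_rfl), hδx⟩
  | limit μ hμ ih =>
    rw [ulmSub_limit hμ] at hx
    simp only [AddSubgroup.mem_iInf, not_forall] at hx
    obtain ⟨γ, hγ, hxγ⟩ := hx
    obtain ⟨δ, hδ, hδx⟩ := ih γ hγ hxγ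
    exact ⟨δ, hδ.trans hγ, hδx⟩

lemma eq_of_mem_ulmSub_not_mem_succ {x : G} {β γ : Ordinal.{0}}
    (hβ : x ∈ ulmSub p G β) (hβ' : x ∉ ulmSub p G (β + 1))
    (hγ : x ∈ ulmSub p G γ) (hγ' : x ∉ ulmSub p G (γ + 1)) : β = γ := by
  by_contra hne
  rcases lt_or_gt_of_ne hne with hlt | hlt
  · exact hβ' (ulmSub_antitone (Order.add_one_le_of_lt hlt) hγ)
  · exact hγ' (ulmSub_antitone (Order.add_one_le_of_lt hlt) hβ)

lemma sub_mem_ulmSub_not_mem_succ {d v : G} {β : Ordinal.{0}}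
    (hd₁ : d ∈ ulmSub p G β) (hd₂ : d ∉ ulmSub p G (β + 1)) (hv : v ∈ ulmSub p G (β + 1)) :
    d - v ∈ ulmSub p G β ∧ d - v ∉ ulmSub p G (β + 1) := by
  refine ⟨sub_mem hd₁ (ulmSub_succ_le p G β hv), ?_⟩
  rwa [sub_eq_add_neg, AddSubgroup.add_mem_cancel_right _ (neg_mem hv)]

lemma height_eq {x : G} {β : Ordinal.{0}}
    (h₁ : x ∈ ulmSub p G β) (h₂ : x ∉ ulmSub p G (β + 1)) : height p x = β := by
  have hdrop : {γ : Ordinal.{0} | x ∈ ulmSub p G γ ∧ x ∉ ulmSub p G (γ + 1)} = {β} :=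
    Set.eq_singleton_iff_unique_mem.mpr
      ⟨⟨h₁, h₂⟩, fun γ hγ => eq_of_mem_ulmSub_not_mem_succ hγ.1 hγ.2 h₁ h₂⟩
  rw [height, if_pos ⟨β, h₁, h₂⟩, hdrop, csInf_singleton]

lemma height_le_iff {x : G} {β : Ordinal.{0}} :
    height p x ≤ β ↔ x ∉ ulmSub p G (β + 1) := by
  constructor
  · intro h hx
    by_cases hdrop : ∃ γ : Ordinal.{0}, x ∈ ulmSub p G γ ∧ x ∉ ulmSub p G (γ + 1)
    · obtain ⟨γ, hγ, hγ'⟩ := hdrop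
      rw [height_eq hγ hγ', WithTop.coe_le_coe] at h
      exact hγ' (ulmSub_antitone (add_le_add_left h 1) hx)
    · rw [height, if_neg hdrop] at h
      exact WithTop.coe_ne_top (le_top.antisymm h)
  · intro hx
    obtain ⟨δ, hδ, hδx, hδx'⟩ := exists_lt_mem_ulmSub_not_mem_succ hx
    rw [height_eq hδx hδx']
    exact WithTop.coe_le_coe.mpr (Order.lt_add_one_iff.mp hδ)

lemma lt_height_iff {x : G} {β : Ordinal.{0}} :
    β < height p x ↔ x ∈ ulmSub p G (β + 1) := by
  rw [← not_le, height_le_iff, not_not]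

/-- Subtracting an element of `G_{β+1}` does not change which translates `d + s` have height
at most `β`. -/
lemma ProperWRT.sub_of_mem_ulmSub_succ {S : AddSubgroup G} {d v : G} {β : Ordinal.{0}}
    (hproper : ProperWRT p S d) (hd₁ : d ∈ ulmSub p G β) (hd₂ : d ∉ ulmSub p G (β + 1))
    (hv : v ∈ ulmSub p G (β + 1)) : ProperWRT p S (d - v) := by
  obtain ⟨hdv₁, hdv₂⟩ := sub_mem_ulmSub_not_mem_succ hd₁ hd₂ hv
  intro s hs
  have hds : d + s ∉ ulmSub p G (β + 1) := by
    rw [← height_le_iff, ← height_eq hd₁ hd₂]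
    exact hproper s hs
  rw [height_eq hdv₁ hdv₂, height_le_iff, sub_add_eq_add_sub, sub_eq_add_neg,
    AddSubgroup.add_mem_cancel_right _ (neg_mem hv)]
  exact hds

end UlmSubgroups

theorem extension_step_high_general (p : ℕ)
    (B : Type) [AddCommGroup B]
    (S : AddSubgroup B)
    (d : B)
    (hproper : ProperWRT p S d)
    (β : Ordinal.{0}) (hd1 : d ∈ ulmSub p B β) (hd2 : d ∉ ulmSub p B (β + 1))
    (hhigh : ((β + 1 : Ordinal.{0}) : WithTop Ordinal.{0}) < height p (p • d)) :
    (∃ v ∈ ulmSub p B (β + 1), p • v = p • d) ∧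
    ∀ v ∈ ulmSub p B (β + 1), p • v = p • d →
      d - v ∈ ulmP p B β ∧ (d - v ∈ ulmSub p B β ∧ d - v ∉ ulmSub p B (β + 1)) ∧
        ProperWRT p S (d - v) := by
  have hpd : p • d ∈ ulmSub p B (β + 1 + 1) := lt_height_iff.mp hhigh
  rw [ulmSub_succ] at hpd
  obtain ⟨v, hv, hvd⟩ := hpd
  refine ⟨⟨v, hv, hvd⟩, fun v hv hvd => ?_⟩
  have hdv := sub_mem_ulmSub_not_mem_succ hd1 hd2 hv
  have hker : d - v ∈ (pHom p B).ker := by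
    rw [AddMonoidHom.mem_ker, pHom_apply, smul_sub, hvd]
    exact sub_self _
  exact ⟨⟨hker, hdv.1⟩, hdv, hproper.sub_of_mem_ulmSub_succ hd1 hd2 hv⟩

/-- Extension step in Ulm's theorem, case `h(pd) > h(d) + 1`: there is `v ∈ B_{h(d)+1}` with
`pv = pd`, and for any such `v` the element `d − v` lies in `P_{h(d)}(B)`, has height exactly
`h(d)`, and is proper with respect to `S`. -/
theorem extension_step_high (p : ℕ) (hp : p.Prime)
    (B : Type) [AddCommGroup B]
    (hB : IsAbelianPGroup p B) (hBred : IsReducedPGroup p B)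
    (S : AddSubgroup B) (hS : (S : Set B).Finite)
    (d : B) (hdS : d ∉ S) (hpd : p • d ∈ S)
    (hproper : ProperWRT p S d)
    (β : Ordinal.{0}) (hd1 : d ∈ ulmSub p B β) (hd2 : d ∉ ulmSub p B (β + 1))
    (hhigh : ((β + 1 : Ordinal.{0}) : WithTop Ordinal.{0}) < height p (p • d)) :
    (∃ v ∈ ulmSub p B (β + 1), p • v = p • d) ∧
    ∀ v ∈ ulmSub p B (β + 1), p • v = p • d →
      d - v ∈ ulmP p B β ∧ (d - v ∈ ulmSub p B β ∧ d - v ∉ ulmSub p B (β + 1)) ∧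
        ProperWRT p S (d - v) :=
  extension_step_high_general p B S d hproper β hd1 hd2 hhigh
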